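/- For every q ≥ 2, the fourth absolute moment of the trace over the unitary group satisfies ∫_{U(q)} |tr(U)|^4 dU = 2, where the integral is with respect to the unit-normalized Haar measure. -/

import Mathlib

/-!
For a continuous representation `ρ` of a compact group, the Haar average of `ρ` is a projection
onto the invariant vectors, so the Haar integral of the character of `ρ` is the dimension of the
invariants. As `tr ((U ⊗ Ū)^{⊗t}) = |tr U|^{2t}`, the integral of `|tr U|^{2t}` is the dimension of
the space of vectors fixed by every `(U ⊗ Ū)^{⊗t}`. This space contains one "pairing vector" for
each permutation of `Fin t`, and these are independent as soon as `t ≤ q`. For `t = 2` they span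
it: diagonal unitaries force an invariant vector to vanish off the pairing indices, permutation
matrices make it constant along orbits, and one Householder reflection shows that the indices
with all four entries equal carry no extra degree of freedom. Hence the fourth moment is `2! = 2`.
-/

open MeasureTheory Matrix

variable (q : ℕ)

noncomputable instance : MeasurableSpace (Matrix.unitaryGroup (Fin q) ℂ) := borel _
instance : BorelSpace (Matrix.unitaryGroup (Fin q) ℂ) := ⟨rfl⟩

instance : IsTopologicalGroup (Matrix.unitaryGroup (Fin q) ℂ) where
  continuous_mul := by
    apply continuous_induced_rng.2
    have h1 : Continuous fun p : Matrix.unitaryGroup (Fin q) ℂ × Matrix.unitaryGroup (Fin q) ℂ =>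
        ((p.1 : Matrix (Fin q) (Fin q) ℂ), (p.2 : Matrix (Fin q) (Fin q) ℂ)) :=
      (continuous_subtype_val.comp continuous_fst).prodMk (continuous_subtype_val.comp continuous_snd)
    exact (continuous_fst.matrix_mul continuous_snd).comp h1
  continuous_inv := by
    apply continuous_induced_rng.2
    have : (fun a : Matrix.unitaryGroup (Fin q) ℂ => ((a⁻¹ : Matrix.unitaryGroup (Fin q) ℂ) : Matrix (Fin q) (Fin q) ℂ))
        = fun a : Matrix.unitaryGroup (Fin q) ℂ => star (a : Matrix (Fin q) (Fin q) ℂ) := by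
      funext a
      rw [← Unitary.star_eq_inv, Unitary.coe_star]
    show Continuous (fun a : Matrix.unitaryGroup (Fin q) ℂ => ((a⁻¹ : Matrix.unitaryGroup (Fin q) ℂ) : Matrix (Fin q) (Fin q) ℂ))
    rw [this]
    exact continuous_subtype_val.star

instance : CompactSpace (Matrix.unitaryGroup (Fin q) ℂ) := by
  apply isCompact_iff_compactSpace.mp
  have hsub : (Matrix.unitaryGroup (Fin q) ℂ : Set (Matrix (Fin q) (Fin q) ℂ)) ⊆
      Set.univ.pi fun _ : Fin q => Set.univ.pi fun _ : Fin q => Metric.closedBall (0 : ℂ) 1 := by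
    intro U hU
    intro i _ 
    intro j _
    simpa [Complex.dist_eq] using entry_norm_bound_of_unitary hU i j
  have hcomp : IsCompact (Set.univ.pi fun _ : Fin q => Set.univ.pi fun _ : Fin q =>
      Metric.closedBall (0 : ℂ) 1) :=
    isCompact_univ_pi fun _ => isCompact_univ_pi fun _ => isCompact_closedBall 0 1
  have hclosed : IsClosed (Matrix.unitaryGroup (Fin q) ℂ : Set (Matrix (Fin q) (Fin q) ℂ)) := by
    have : (Matrix.unitaryGroup (Fin q) ℂ : Set (Matrix (Fin q) (Fin q) ℂ)) =
        (fun U : Matrix (Fin q) (Fin q) ℂ => star U * U) ⁻¹' {1} ∩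
        (fun U : Matrix (Fin q) (Fin q) ℂ => U * star U) ⁻¹' {1} := by
      ext U
      simp [Matrix.mem_unitaryGroup_iff, Unitary.mem_iff, Set.mem_inter_iff]
      try tauto
    rw [this]
    exact ((isClosed_singleton.preimage (continuous_id.star.matrix_mul continuous_id)).inter
      (isClosed_singleton.preimage (continuous_id.matrix_mul continuous_id.star)))
  exact hcomp.of_isClosed_subset hclosed hsub

/-- The unit-normalized Haar measure on the unitary group `U(q)`:
the Haar measure normalized so that the total mass of `U(q)` is `1`. -/
noncomputable def haarU : Measure (Matrix.unitaryGroup (Fin q) ℂ) :=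
  Measure.haarMeasure (⊤ : TopologicalSpace.PositiveCompacts (Matrix.unitaryGroup (Fin q) ℂ))

/-- The `t`-fold Kronecker power `(A ⊗ Ā)^{⊗ t}`, realized as a matrix whose rows and
columns are indexed by `Fin t → Fin q × Fin q`: the entry at `(i, j)` is
`∏ k, A (i k).1 (j k).1 * conj (A (i k).2 (j k).2)`. -/
noncomputable def kronPow (t : ℕ) (A : Matrix (Fin q) (Fin q) ℂ) :
    Matrix (Fin t → Fin q × Fin q) (Fin t → Fin q × Fin q) ℂ :=
  Matrix.of fun i j => ∏ k : Fin t, (A (i k).1 (j k).1 * (starRingEnd ℂ) (A (i k).2 (j k).2))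

theorem Continuous.integrable_matrix_elem {X m n : Type*} [TopologicalSpace X] [CompactSpace X]
    [MeasurableSpace X] [OpensMeasurableSpace X] {μ : Measure X} [IsFiniteMeasure μ]
    {f : X → Matrix m n ℂ} (hf : Continuous f) (i : m) (j : n) :
    Integrable (fun x => f x i j) μ :=
  (hf.matrix_elem i j).integrable_of_hasCompactSupport (.of_compactSpace _)

section HaarAverage

variable {G ι : Type*} [Group G] [Fintype ι] [DecidableEq ι]

def matrixRepresentation (ρ : G →* Matrix ι ι ℂ) : Representation ℂ G (ι → ℂ) :=
  (Matrix.toLinAlgEquiv' : Matrix ι ι ℂ ≃ₐ[ℂ] _).toMonoidHom.comp ρ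

theorem mem_invariants_matrixRepresentation {ρ : G →* Matrix ι ι ℂ} {v : ι → ℂ} :
    v ∈ (matrixRepresentation ρ).invariants ↔ ∀ g, ρ g *ᵥ v = v :=
  Iff.rfl

variable [TopologicalSpace G] [CompactSpace G] [MeasurableSpace G] [OpensMeasurableSpace G]

noncomputable def haarAverage (μ : Measure G) (ρ : G →* Matrix ι ι ℂ) : Matrix ι ι ℂ :=
  Matrix.of fun i j => ∫ g, ρ g i j ∂μ

variable {μ : Measure G} [IsFiniteMeasure μ] {ρ : G →* Matrix ι ι ℂ} (hρ : Continuous ρ)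
include hρ

theorem haarAverage_mulVec_apply (v : ι → ℂ) (i : ι) :
    (haarAverage μ ρ *ᵥ v) i = ∫ g, (ρ g *ᵥ v) i ∂μ := by
  simp only [mulVec, dotProduct, haarAverage, of_apply]
  rw [integral_finsetSum _ fun j _ => (hρ.integrable_matrix_elem i j).mul_const _]
  simp only [integral_mul_const]

theorem mul_haarAverage_apply (A : Matrix ι ι ℂ) (i j : ι) :
    (A * haarAverage μ ρ) i j = ∫ g, (A * ρ g) i j ∂μ := by
  simp only [mul_apply, haarAverage, of_apply]
  rw [integral_finsetSum _ fun k _ => (hρ.integrable_matrix_elem k j).const_mul _]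
  simp only [integral_const_mul]

theorem trace_haarAverage : (haarAverage μ ρ).trace = ∫ g, (ρ g).trace ∂μ := by
  simp only [trace, diag, haarAverage, of_apply]
  rw [integral_finsetSum _ fun i _ => hρ.integrable_matrix_elem i i]

theorem mul_haarAverage [MeasurableMul G] [μ.IsMulLeftInvariant] (h : G) :
    ρ h * haarAverage μ ρ = haarAverage μ ρ := by
  ext i j
  rw [mul_haarAverage_apply hρ]
  simp_rw [← map_mul]
  exact integral_mul_left_eq_self (fun g => ρ g i j) h

end HaarAverage

section HaarProjection

variable {G ι : Type*} [Group G] [TopologicalSpace G] [CompactSpace G] [MeasurableSpace G]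
  [OpensMeasurableSpace G] [MeasurableMul G] {μ : Measure G} [IsProbabilityMeasure μ]
  [μ.IsMulLeftInvariant] [Fintype ι] [DecidableEq ι] {ρ : G →* Matrix ι ι ℂ} (hρ : Continuous ρ)
include hρ

theorem isProj_haarAverage :
    LinearMap.IsProj (matrixRepresentation ρ).invariants (toLin' (haarAverage μ ρ)) where
  map_mem v := mem_invariants_matrixRepresentation.2 fun h => by
    rw [toLin'_apply, mulVec_mulVec, mul_haarAverage hρ]
  map_id v hv := by
    ext i
    simp [haarAverage_mulVec_apply hρ, mem_invariants_matrixRepresentation.1 hv]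

theorem integral_trace_eq_finrank_invariants :
    ∫ g, (ρ g).trace ∂μ = Module.finrank ℂ (matrixRepresentation ρ).invariants := by
  rw [← trace_haarAverage hρ, ← trace_toLin'_eq, (isProj_haarAverage hρ).trace]

end HaarProjection

section KronPow

variable {q : ℕ} (t : ℕ)

theorem kronPow_mul (A B : Matrix (Fin q) (Fin q) ℂ) :
    kronPow q t (A * B) = kronPow q t A * kronPow q t B := by
  ext i j
  simp only [kronPow, of_apply, mul_apply, map_sum, map_mul, Finset.sum_mul_sum]
  rw [Finset.prod_congr rfl fun k _ => (Fintype.sum_prod_type' _).symm, Fintype.prod_sum]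
  refine Fintype.sum_congr _ _ fun m => ?_
  rw [← Finset.prod_mul_distrib]
  exact Finset.prod_congr rfl fun k _ => by ring

theorem kronPow_diagonal (d : Fin q → ℂ) :
    kronPow q t (diagonal d) = diagonal fun i => ∏ k, d (i k).1 * starRingEnd ℂ (d (i k).2) := by
  ext i j
  by_cases hij : i = j
  · subst hij
    simp [kronPow]
  · obtain ⟨k, hk⟩ := Function.ne_iff.1 hij
    rw [Ne, Prod.ext_iff, not_and_or] at hk
    rw [diagonal_apply_ne _ hij]
    refine Finset.prod_eq_zero (Finset.mem_univ k) ?_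
    rcases hk with h | h <;> simp [diagonal_apply_ne _ h]

theorem kronPow_one : kronPow q t 1 = 1 := by
  simpa using kronPow_diagonal t fun _ => (1 : ℂ)

theorem kronPow_permMatrix (σ : Equiv.Perm (Fin q)) :
    kronPow q t (σ.permMatrix ℂ) =
      Equiv.Perm.permMatrix ℂ (Equiv.piCongrRight fun (_ : Fin t) => σ.prodCongr σ) := by
  ext i j
  simp only [kronPow, Equiv.Perm.permMatrix, PEquiv.toMatrix_apply, Equiv.toPEquiv_apply,
    Option.mem_def, Option.some_inj, of_apply, Equiv.piCongrRight_apply, Equiv.prodCongr_apply,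
    funext_iff, Prod.ext_iff, Pi.map_apply, Prod.map_fst, Prod.map_snd]
  calc _ = ∏ k, if σ (i k).1 = (j k).1 ∧ σ (i k).2 = (j k).2 then (1 : ℂ) else 0 :=
        Finset.prod_congr rfl fun k _ => by split_ifs <;> simp_all
    _ = _ := by simp [Fintype.prod_boole]

theorem trace_kronPow (A : Matrix (Fin q) (Fin q) ℂ) :
    (kronPow q t A).trace = ((‖A.trace‖ ^ (2 * t) : ℝ) : ℂ) := by
  have h : ∑ p : Fin q × Fin q, A p.1 p.1 * starRingEnd ℂ (A p.2 p.2) = (‖A.trace‖ : ℂ) ^ 2 := by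
    rw [Fintype.sum_prod_type' (fun a b => A a a * starRingEnd ℂ (A b b)), ← Finset.sum_mul_sum,
      ← map_sum, ← Complex.mul_conj']
    rfl
  simp only [trace, diag, kronPow, of_apply]
  rw [← Fintype.prod_sum (κ := fun _ => Fin q × Fin q)
    (fun _ p => A p.1 p.1 * starRingEnd ℂ (A p.2 p.2))]
  simp [h, pow_mul, trace]

theorem continuous_kronPow : Continuous (kronPow q t) := by
  refine continuous_matrix fun i j => ?_
  simp only [kronPow, of_apply]
  fun_prop

end KronPow

noncomputable def kronPowHom (q t : ℕ) :
    Matrix (Fin q) (Fin q) ℂ →* Matrix (Fin t → Fin q × Fin q) (Fin t → Fin q × Fin q) ℂ where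
  toFun := kronPow q t
  map_one' := kronPow_one t
  map_mul' := kronPow_mul t

noncomputable def kronPowRep (q t : ℕ) :
    Representation ℂ (unitaryGroup (Fin q) ℂ) ((Fin t → Fin q × Fin q) → ℂ) :=
  matrixRepresentation ((kronPowHom q t).comp (unitaryGroup (Fin q) ℂ).subtype)

theorem mem_invariants_kronPowRep {q t : ℕ} {v : (Fin t → Fin q × Fin q) → ℂ} :
    v ∈ (kronPowRep q t).invariants ↔ ∀ U ∈ unitaryGroup (Fin q) ℂ, kronPow q t U *ᵥ v = v :=
  Subtype.forall

instance : IsProbabilityMeasure (haarU q) :=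
  ⟨Measure.haarMeasure_self⟩

instance : (haarU q).IsMulLeftInvariant :=
  Measure.isMulLeftInvariant_haarMeasure _

theorem integral_norm_trace_pow_eq_finrank_invariants (t : ℕ) :
    ∫ U : unitaryGroup (Fin q) ℂ, ‖(U : Matrix (Fin q) (Fin q) ℂ).trace‖ ^ (2 * t) ∂haarU q =
      Module.finrank ℂ (kronPowRep q t).invariants := by
  apply Complex.ofReal_injective
  rw [← integral_complex_ofReal]
  simp_rw [← trace_kronPow]
  exact integral_trace_eq_finrank_invariants
    (ρ := (kronPowHom q t).comp (unitaryGroup (Fin q) ℂ).subtype)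
    ((continuous_kronPow t).comp continuous_subtype_val)

section UnitaryMatrices

variable {n : Type*} [Fintype n] [DecidableEq n]

theorem sum_mul_conj_of_mem_unitaryGroup {U : Matrix n n ℂ} (hU : U ∈ unitaryGroup n ℂ)
    (a b : n) : ∑ c, U a c * starRingEnd ℂ (U b c) = (1 : Matrix n n ℂ) a b := by
  rw [← mem_unitaryGroup_iff.1 hU, mul_apply]
  rfl

theorem diagonal_mem_unitaryGroup {d : n → ℂ} (hd : ∀ a, d a * starRingEnd ℂ (d a) = 1) :
    diagonal d ∈ unitaryGroup n ℂ := by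
  rw [mem_unitaryGroup_iff, star_eq_conjTranspose, diagonal_conjTranspose, diagonal_mul_diagonal,
    ← diagonal_one]
  exact congrArg diagonal (funext hd)

theorem permMatrix_mem_unitaryGroup (σ : Equiv.Perm n) : σ.permMatrix ℂ ∈ unitaryGroup n ℂ := by
  rw [mem_unitaryGroup_iff, star_eq_conjTranspose, conjTranspose_permMatrix, ← permMatrix_mul,
    inv_mul_cancel, permMatrix_one]

noncomputable def householder (w : n → ℂ) : Matrix n n ℂ :=
  1 - (2 / (star w ⬝ᵥ w)) • vecMulVec w (star w)

theorem householder_mem_unitaryGroup (w : n → ℂ) : householder w ∈ unitaryGroup n ℂ := by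
  have hreal : star (star w ⬝ᵥ w) = star w ⬝ᵥ w := by
    simp [dotProduct, mul_comm]
  have hsq : vecMulVec w (star w) * vecMulVec w (star w) =
      (star w ⬝ᵥ w) • vecMulVec w (star w) := by
    rw [vecMulVec_mul_vecMulVec, vecMulVec_smul]
  have hstar : star (householder w) = householder w := by
    simp [householder, star_sub, star_smul, hreal, star_eq_conjTranspose, conjTranspose_vecMulVec]
  rw [mem_unitaryGroup_iff, hstar, householder, sub_mul, mul_sub, mul_sub, smul_mul_smul_comm, hsq]
  simp only [one_mul, mul_one, smul_smul]
  rcases eq_or_ne (star w ⬝ᵥ w) 0 with hw | hw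
  · simp [hw]
  · field_simp
    module

end UnitaryMatrices

section Pairing

variable {q t : ℕ}

def pairingVec (π : Equiv.Perm (Fin t)) : (Fin t → Fin q × Fin q) → ℂ :=
  fun i => if ∀ k, (i k).1 = (i (π k)).2 then 1 else 0

theorem kronPow_mulVec_pairingVec {U : Matrix (Fin q) (Fin q) ℂ}
    (hU : U ∈ unitaryGroup (Fin q) ℂ) (π : Equiv.Perm (Fin t)) :
    kronPow q t U *ᵥ pairingVec π = pairingVec π := by
  ext i
  -- Writing `j = (c, d)`, the pairing constraint forces `d = c ∘ π⁻¹`; the remaining sum over `c`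
  -- factors over `k` into entries of `U * star U = 1`.
  calc (kronPow q t U *ᵥ pairingVec π) i
      = ∑ c : Fin t → Fin q, ∏ k, U (i k).1 (c k) * starRingEnd ℂ (U (i (π k)).2 (c k)) := by
        rw [mulVec, dotProduct, ← (Equiv.arrowProdEquivProdArrow _ _ _).symm.sum_comp,
          Fintype.sum_prod_type]
        refine Fintype.sum_congr _ _ fun c => ?_
        have hpair : ∀ d : Fin t → Fin q,
            pairingVec π (fun k => (c k, d k)) = if d = c ∘ π.symm then 1 else 0 := fun d => by
          simp only [pairingVec, funext_iff, Function.comp_apply]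
          congr 1
          exact propext ⟨fun h x => by simpa using (h (π.symm x)).symm, fun h k => by simp [h]⟩
        simp_rw [Equiv.arrowProdEquivProdArrow, Equiv.coe_fn_symm_mk, hpair, mul_ite, mul_one,
          mul_zero, Finset.sum_ite_eq', Finset.mem_univ, if_true, kronPow, of_apply,
          Finset.prod_mul_distrib]
        congr 1
        rw [← Equiv.prod_comp π]
        simp
    _ = ∏ k, (1 : Matrix (Fin q) (Fin q) ℂ) (i k).1 (i (π k)).2 := by
        rw [← Fintype.prod_sum (κ := fun _ => Fin q)
          (fun k c => U (i k).1 c * starRingEnd ℂ (U (i (π k)).2 c))]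
        simp_rw [sum_mul_conj_of_mem_unitaryGroup hU]
    _ = pairingVec π i := by
        simp [one_apply, Fintype.prod_boole, pairingVec]

theorem pairingVec_mem_invariants (π : Equiv.Perm (Fin t)) :
    pairingVec π ∈ (kronPowRep q t).invariants :=
  mem_invariants_kronPowRep.2 fun _ hU => kronPow_mulVec_pairingVec hU π

theorem pairingVec_apply_castLE (htq : t ≤ q) (π σ : Equiv.Perm (Fin t)) :
    pairingVec π (fun k => (Fin.castLE htq k, Fin.castLE htq (σ.symm k))) =
      if π = σ then 1 else 0 := by
  simp only [pairingVec, Fin.castLE_inj, Equiv.ext_iff, Equiv.eq_symm_apply, eq_comm]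

theorem linearIndependent_pairingVec (htq : t ≤ q) :
    LinearIndependent ℂ (pairingVec (q := q) (t := t)) := by
  refine Fintype.linearIndependent_iff.2 fun g hg σ => ?_
  simpa [pairingVec_apply_castLE htq] using
    congrFun hg fun k => (Fin.castLE htq k, Fin.castLE htq (σ.symm k))

end Pairing

theorem Equiv.Perm.exists_apply_eq_and_apply_eq {α : Type*} {a b c d : α} (hab : a ≠ b)
    (hcd : c ≠ d) : ∃ σ : Equiv.Perm α, σ a = c ∧ σ b = d :=
  MulAction.is_two_pretransitive_iff.1 (Equiv.Perm.isMultiplyPretransitive α 2) hab hcd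

section Invariants

variable {q t : ℕ} {v : (Fin t → Fin q × Fin q) → ℂ} (hv : v ∈ (kronPowRep q t).invariants)
include hv

theorem prod_mul_apply_of_mem_invariants {d : Fin q → ℂ}
    (hd : ∀ a, d a * starRingEnd ℂ (d a) = 1) (i : Fin t → Fin q × Fin q) :
    (∏ k, d (i k).1 * starRingEnd ℂ (d (i k).2)) * v i = v i := by
  simpa [kronPow_diagonal, mulVec_diagonal] using
    congrFun (mem_invariants_kronPowRep.1 hv _ (diagonal_mem_unitaryGroup hd)) i

theorem apply_prodMap_comp_of_mem_invariants (σ : Equiv.Perm (Fin q))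
    (i : Fin t → Fin q × Fin q) : v (Prod.map σ σ ∘ i) = v i := by
  have := congrFun (mem_invariants_kronPowRep.1 hv _ (permMatrix_mem_unitaryGroup σ)) i
  rw [kronPow_permMatrix, permMatrix_mulVec] at this
  exact this

end Invariants

section DegreeTwo

variable {q : ℕ}

theorem pairingVec_one_mul_pairingVec_swap :
    pairingVec (q := q) (t := 2) 1 * pairingVec (Equiv.swap 0 1) =
      ∑ c, Pi.single (fun _ => (c, c)) 1 := by
  funext j
  obtain ⟨a0, b0, a1, b1, rfl⟩ : ∃ a0 b0 a1 b1, j = ![(a0, b0), (a1, b1)] :=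
    ⟨_, _, _, _, by funext k; fin_cases k <;> rfl⟩
  simp only [Pi.mul_apply, pairingVec, Fin.forall_fin_two, Finset.sum_apply, Pi.single_apply,
    funext_iff, Equiv.Perm.one_apply, Equiv.swap_apply_left, Equiv.swap_apply_right,
    Matrix.cons_val_zero, Matrix.cons_val_one, Prod.ext_iff, mul_ite, mul_one, mul_zero]
  by_cases h : a0 = b0 ∧ a1 = b1 ∧ a0 = b1
  · obtain ⟨rfl, rfl, rfl⟩ := h
    simp
  · rw [Finset.sum_eq_zero fun c _ => if_neg (by grind)]
    grind

/- Row `a` of the reflection in `e_a + 2 e_b` is `(3/5, -4/5)`, whereas invariance of the indicator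
of the constant indices would force `∑ c, ‖householder w a c‖ ^ 4 = 1`. -/
theorem pairingVec_one_mul_pairingVec_swap_not_mem_invariants (hq : 2 ≤ q) :
    pairingVec 1 * pairingVec (Equiv.swap 0 1) ∉ (kronPowRep q 2).invariants := by
  obtain ⟨a, b, hab⟩ := (Fin.nontrivial_iff_two_le.2 hq).exists_pair_ne
  set w : Fin q → ℂ := Pi.single a 1 + Pi.single b 2
  have hw : star w ⬝ᵥ w = 5 := by
    simp [w, dotProduct_add, hab, hab.symm]
    norm_num
  have hH : ∀ c, householder w a c = if c = a then 3 / 5 else if c = b then -4 / 5 else 0 := by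
    intro c
    simp only [householder, hw, Matrix.sub_apply, Matrix.smul_apply, vecMulVec_apply, smul_eq_mul]
    rcases eq_or_ne c a with rfl | hca
    · simp [w, hab.symm]
      norm_num
    rcases eq_or_ne c b with rfl | hcb
    · simp [w, hab, hab.symm]
      norm_num
    simp [w, hca, hcb, hca.symm]
  intro hD
  have := congrFun (mem_invariants_kronPowRep.1 hD _ (householder_mem_unitaryGroup w))
    fun _ => (a, a)
  rw [pairingVec_one_mul_pairingVec_swap, mulVec_sum] at this
  simp only [mulVec_single_one, Finset.sum_apply, col_apply, kronPow, of_apply,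
    Fin.prod_univ_two, hH] at this
  rw [Fintype.sum_eq_add a b hab (fun c hc => by simp [hc.1, hc.2])] at this
  simp [hab.symm, Pi.single_apply, funext_iff, map_ofNat] at this
  norm_num at this

variable {v : (Fin 2 → Fin q × Fin q) → ℂ} (hv : v ∈ (kronPowRep q 2).invariants)
include hv

/- The diagonal unitary with phase `I` at `s` multiplies `v i` by `I ^ m * (-I) ^ m'`, where `m` and
`m'` count the occurrences of `s` among the first and among the second coordinates of `i`; so
both kinds of coordinates take the same set of values. -/
theorem pairing_of_apply_ne_zero {i : Fin 2 → Fin q × Fin q} (hi : v i ≠ 0) :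
    ((i 0).1 = (i 0).2 ∧ (i 1).1 = (i 1).2) ∨ ((i 0).1 = (i 1).2 ∧ (i 1).1 = (i 0).2) := by
  have phase : ∀ s, (if (i 0).1 = s then Complex.I else 1) *
      starRingEnd ℂ (if (i 0).2 = s then Complex.I else 1) *
      ((if (i 1).1 = s then Complex.I else 1) *
      starRingEnd ℂ (if (i 1).2 = s then Complex.I else 1)) = 1 := fun s => by
    have hd : ∀ a : Fin q, (if a = s then Complex.I else 1) *
        starRingEnd ℂ (if a = s then Complex.I else 1) = 1 := fun a => by
      split_ifs <;> simp
    have := prod_mul_apply_of_mem_invariants hv hd i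
    rw [Fin.prod_univ_two] at this
    exact mul_right_cancel₀ hi (this.trans (one_mul _).symm)
  generalize (i 0).1 = a0, (i 0).2 = b0, (i 1).1 = a1, (i 1).2 = b1 at phase ⊢
  have hb : ∀ s, s ≠ a0 → s ≠ a1 → s ≠ b0 ∧ s ≠ b1 := fun s h0 h1 => by
    have := phase s
    simp only [Ne.symm h0, Ne.symm h1, if_false, one_mul] at this
    constructor <;> rintro rfl <;> split_ifs at this <;>
      first | contradiction | norm_num [Complex.ext_iff] at this
  have ha : ∀ s, s ≠ b0 → s ≠ b1 → s ≠ a0 ∧ s ≠ a1 := fun s h0 h1 => by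
    have := phase s
    simp only [Ne.symm h0, Ne.symm h1, if_false, map_one, mul_one] at this
    constructor <;> rintro rfl <;> split_ifs at this <;>
      first | contradiction | norm_num [Complex.ext_iff] at this
  grind

/- `v` is constant on each of the three `Perm (Fin q)`-orbits of pairing indices, `![(c, c), (d, d)]`
and `![(c, d), (d, c)]` with `c ≠ d`, and `![(c, c), (c, c)]`, and vanishes elsewhere. -/
theorem eq_combination_of_mem_invariants {a b : Fin q} (hab : a ≠ b) :
    v = v ![(a, a), (b, b)] • pairingVec 1 + v ![(a, b), (b, a)] • pairingVec (Equiv.swap 0 1) +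
      (v ![(a, a), (a, a)] - v ![(a, a), (b, b)] - v ![(a, b), (b, a)]) •
        (pairingVec 1 * pairingVec (Equiv.swap 0 1)) := by
  funext j
  obtain ⟨a0, b0, a1, b1, rfl⟩ : ∃ a0 b0 a1 b1, j = ![(a0, b0), (a1, b1)] :=
    ⟨_, _, _, _, by funext k; fin_cases k <;> rfl⟩
  have hperm : ∀ (σ : Equiv.Perm (Fin q)) (i : Fin 2 → Fin q × Fin q),
      ![(a0, b0), (a1, b1)] = Prod.map σ σ ∘ i → v ![(a0, b0), (a1, b1)] = v i :=
    fun σ i h => h ▸ apply_prodMap_comp_of_mem_invariants hv σ i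
  simp only [Pi.add_apply, Pi.smul_apply, Pi.mul_apply, smul_eq_mul, pairingVec,
    Fin.forall_fin_two, Equiv.Perm.one_apply, Equiv.swap_apply_left, Equiv.swap_apply_right,
    Matrix.cons_val_zero, Matrix.cons_val_one]
  by_cases h1 : a0 = b0 ∧ a1 = b1 <;> by_cases h2 : a0 = b1 ∧ a1 = b0
  · obtain ⟨rfl, rfl⟩ := h1
    obtain ⟨rfl⟩ : a0 = a1 := h2.1
    rw [hperm (Equiv.swap a a0) ![(a, a), (a, a)] (by funext k; fin_cases k <;> simp)]
    simp
  · obtain ⟨rfl, rfl⟩ := h1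
    have h01 : a0 ≠ a1 := fun h => h2 ⟨h, h.symm⟩
    obtain ⟨σ, hσa, hσb⟩ := Equiv.Perm.exists_apply_eq_and_apply_eq hab h01
    rw [hperm σ ![(a, a), (b, b)] (by funext k; fin_cases k <;> simp [hσa, hσb])]
    simp [h01]
  · obtain ⟨rfl, rfl⟩ := h2
    have h01 : a0 ≠ a1 := fun h => h1 ⟨h, h.symm⟩
    obtain ⟨σ, hσa, hσb⟩ := Equiv.Perm.exists_apply_eq_and_apply_eq hab h01
    rw [hperm σ ![(a, b), (b, a)] (by funext k; fin_cases k <;> simp [hσa, hσb])]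
    simp [h01]
  · have h0 : v ![(a0, b0), (a1, b1)] = 0 := by
      by_contra h
      simpa [h1, h2] using pairing_of_apply_ne_zero hv h
    simp [h0, h1, h2]

end DegreeTwo

theorem invariants_kronPowRep_two {q : ℕ} (hq : 2 ≤ q) :
    (kronPowRep q 2).invariants = Submodule.span ℂ (Set.range pairingVec) := by
  refine le_antisymm (fun v hv => ?_) (Submodule.span_le.2 ?_)
  · obtain ⟨a, b, hab⟩ := (Fin.nontrivial_iff_two_le.2 hq).exists_pair_ne
    have hdecomp := eq_combination_of_mem_invariants hv hab
    set c := v ![(a, a), (a, a)] - v ![(a, a), (b, b)] - v ![(a, b), (b, a)]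
    have hc : c = 0 := by
      by_contra hc
      refine pairingVec_one_mul_pairingVec_swap_not_mem_invariants hq
        ((Submodule.smul_mem_iff _ hc).1 ?_)
      rw [eq_sub_of_add_eq' hdecomp.symm]
      exact sub_mem hv (add_mem (Submodule.smul_mem _ _ (pairingVec_mem_invariants 1))
        (Submodule.smul_mem _ _ (pairingVec_mem_invariants _)))
    rw [hdecomp, hc, zero_smul, add_zero]
    exact add_mem (Submodule.smul_mem _ _ (Submodule.subset_span ⟨1, rfl⟩))
      (Submodule.smul_mem _ _ (Submodule.subset_span ⟨_, rfl⟩))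
  · rintro _ ⟨π, rfl⟩
    exact pairingVec_mem_invariants π

theorem finrank_invariants_kronPowRep_two {q : ℕ} (hq : 2 ≤ q) :
    Module.finrank ℂ (kronPowRep q 2).invariants = 2 := by
  rw [invariants_kronPowRep_two hq, finrank_span_eq_card (linearIndependent_pairingVec hq),
    Fintype.card_perm]
  rfl

/-- For every `q ≥ 2`, the fourth absolute moment of the trace over the unitary
group satisfies `∫_{U(q)} |tr U|⁴ dU = 2`, with respect to the unit-normalized Haar measure. -/
theorem haar_fourth_trace_moment (hq : 2 ≤ q) :
    ∫ U : Matrix.unitaryGroup (Fin q) ℂ,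
        ‖Matrix.trace ((U : Matrix (Fin q) (Fin q) ℂ))‖ ^ 4 ∂(haarU q) = 2 := by
  simpa [finrank_invariants_kronPowRep_two hq] using
    integral_norm_trace_pow_eq_finrank_invariants q 2
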